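/- arXiv:1512.08874 — 4 statements merged into one kernel-verified Lean document; each statement's English description precedes it below -/
import Mathlib

section
/- Simple Moutard transform preserves the generalized analytic function equation: let u, f₁, f₁⁺, ψ be C¹ functions on D with ∂_z̄ f₁ = u·conj(f₁), ∂_z̄ f₁⁺ = -conj(u)·conj(f₁⁺), ∂_z̄ ψ = u·conj(ψ). Let ω_{f₁,f₁⁺} and ω_{ψ,f₁⁺} be purely imaginary potentials with ∂_z ω_{f,g} = fg, ∂_z̄ ω_{f,g} = -conj(fg), and assume ω_{f₁,f₁⁺} ≠ 0 on D. Define ũ = u + f₁·conj(f₁⁺)/ω_{f₁,f₁⁺} and ψ̃ = ψ - f₁·ω_{ψ,f₁⁺}/ω_{f₁,f₁⁺}. Then ∂_z̄ ψ̃ = ũ·conj(ψ̃) in D. -/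
open Complex ComplexConjugate

/-- Wirtinger derivative ∂_z = (∂_x - i ∂_y)/2. -/
noncomputable def dz (f : ℂ → ℂ) (z : ℂ) : ℂ :=
  (fderiv ℝ f z 1 - Complex.I * fderiv ℝ f z Complex.I) / 2

/-- Wirtinger derivative ∂_z̄ = (∂_x + i ∂_y)/2. -/
noncomputable def dzbar (f : ℂ → ℂ) (z : ℂ) : ℂ :=
  (fderiv ℝ f z 1 + Complex.I * fderiv ℝ f z Complex.I) / 2

section Wirtinger

variable {f g : ℂ → ℂ} {z : ℂ}

lemma dzbar_sub (hf : DifferentiableAt ℝ f z) (hg : DifferentiableAt ℝ g z) :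
    dzbar (fun w => f w - g w) z = dzbar f z - dzbar g z := by
  simp only [dzbar, fderiv_fun_sub hf hg, sub_apply]
  ring

lemma dzbar_mul (hf : DifferentiableAt ℝ f z) (hg : DifferentiableAt ℝ g z) :
    dzbar (fun w => f w * g w) z = dzbar f z * g z + f z * dzbar g z := by
  simp only [dzbar, fderiv_fun_mul hf hg, add_apply, smul_apply, smul_eq_mul]
  ring

lemma dzbar_inv (hg : DifferentiableAt ℝ g z) (hz : g z ≠ 0) :
    dzbar (fun w => (g w)⁻¹) z = -dzbar g z / g z ^ 2 := by
  have hderiv : fderiv ℝ (fun w => (g w)⁻¹) z =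
      (-(ContinuousLinearMap.mulLeftRight ℝ ℂ (g z)⁻¹) (g z)⁻¹).comp (fderiv ℝ g z) :=
    ((hasFDerivAt_inv' hz).comp z hg.hasFDerivAt).fderiv
  simp only [dzbar, hderiv, ContinuousLinearMap.coe_comp, Function.comp_apply,
    neg_apply, ContinuousLinearMap.mulLeftRight_apply]
  field_simp
  ring

lemma dzbar_div (hf : DifferentiableAt ℝ f z) (hg : DifferentiableAt ℝ g z) (hz : g z ≠ 0) :
    dzbar (fun w => f w / g w) z = (dzbar f z * g z - f z * dzbar g z) / g z ^ 2 := by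
  simp only [div_eq_mul_inv]
  rw [dzbar_mul hf (hg.fun_inv hz), dzbar_inv hg hz]
  field_simp
  ring

end Wirtinger

lemma conj_eq_neg_of_re_eq_zero {w : ℂ} (hw : w.re = 0) : conj w = -w := by
  apply Complex.ext <;> simp [hw]

/- The quotient-rule expansion of `∂_z̄ ψ̃` at a point, with `a = u`, `b = f₁`, `c = f₁⁺`, `p = ψ`;
it equals `ũ · conj ψ̃` only because the potentials satisfy `conj Ω = -Ω` and `conj ω = -ω`. -/
lemma moutard_dzbar_identity (a b c p Ω ω : ℂ) (hΩ : Ω.re = 0) (hω : ω.re = 0) (hΩ0 : Ω ≠ 0) :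
    a * conj p - ((a * conj b * ω + b * -conj (p * c)) * Ω - b * ω * -conj (b * c)) / Ω ^ 2 =
      (a + b * conj c / Ω) * conj (p - b * ω / Ω) := by
  simp only [map_sub, map_mul, map_div₀, conj_eq_neg_of_re_eq_zero hΩ,
    conj_eq_neg_of_re_eq_zero hω]
  field_simp
  ring

theorem simple_moutard_preserves_equation_general
    (D : Set ℂ) (hD : IsOpen D) (u f₁ f₁p ψ ωff ωψf : ℂ → ℂ)
    (hf₁ : ContDiffOn ℝ 1 f₁ D)
    (hψC : ContDiffOn ℝ 1 ψ D)
    (hωffC : ContDiffOn ℝ 1 ωff D) (hωψfC : ContDiffOn ℝ 1 ωψf D)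
    (hf : ∀ z ∈ D, dzbar f₁ z = u z * conj (f₁ z))
    (hψ : ∀ z ∈ D, dzbar ψ z = u z * conj (ψ z))
    (hωff2 : ∀ z ∈ D, dzbar ωff z = -conj (f₁ z * f₁p z))
    (hωffim : ∀ z ∈ D, (ωff z).re = 0)
    (hωψf2 : ∀ z ∈ D, dzbar ωψf z = -conj (ψ z * f₁p z))
    (hωψfim : ∀ z ∈ D, (ωψf z).re = 0)
    (hne : ∀ z ∈ D, ωff z ≠ 0) :
    ∀ z ∈ D, dzbar (fun w => ψ w - f₁ w * ωψf w / ωff w) z =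
      (u z + f₁ z * conj (f₁p z) / ωff z) *
        conj (ψ z - f₁ z * ωψf z / ωff z) := by
  intro z hz
  have diff {φ : ℂ → ℂ} (hφ : ContDiffOn ℝ 1 φ D) : DifferentiableAt ℝ φ z :=
    (hφ.differentiableOn one_ne_zero).differentiableAt (hD.mem_nhds hz)
  have hf₁z := diff hf₁
  have hωψfz := diff hωψfC
  have hωffz := diff hωffC
  have hquot : DifferentiableAt ℝ (fun w => f₁ w * ωψf w / ωff w) z := by
    simpa only [div_eq_mul_inv] using (hf₁z.fun_mul hωψfz).fun_mul (hωffz.fun_inv (hne z hz))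
  rw [dzbar_sub (diff hψC) hquot, dzbar_div (hf₁z.fun_mul hωψfz) hωffz (hne z hz),
    dzbar_mul hf₁z hωψfz, hψ z hz, hf z hz, hωψf2 z hz, hωff2 z hz]
  exact moutard_dzbar_identity _ _ _ _ _ _ (hωffim z hz) (hωψfim z hz) (hne z hz)

/-- the simple Moutard transform preserves the generalized analytic
function equation. -/
theorem simple_moutard_preserves_equation
    (D : Set ℂ) (hD : IsOpen D) (u f₁ f₁p ψ ωff ωψf : ℂ → ℂ)
    (hu : ContDiffOn ℝ 1 u D) (hf₁ : ContDiffOn ℝ 1 f₁ D)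
    (hf₁p : ContDiffOn ℝ 1 f₁p D) (hψC : ContDiffOn ℝ 1 ψ D)
    (hωffC : ContDiffOn ℝ 1 ωff D) (hωψfC : ContDiffOn ℝ 1 ωψf D)
    (hf : ∀ z ∈ D, dzbar f₁ z = u z * conj (f₁ z))
    (hfp : ∀ z ∈ D, dzbar f₁p z = -conj (u z) * conj (f₁p z))
    (hψ : ∀ z ∈ D, dzbar ψ z = u z * conj (ψ z))
    (hωff1 : ∀ z ∈ D, dz ωff z = f₁ z * f₁p z)
    (hωff2 : ∀ z ∈ D, dzbar ωff z = -conj (f₁ z * f₁p z))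
    (hωffim : ∀ z ∈ D, (ωff z).re = 0)
    (hωψf1 : ∀ z ∈ D, dz ωψf z = ψ z * f₁p z)
    (hωψf2 : ∀ z ∈ D, dzbar ωψf z = -conj (ψ z * f₁p z))
    (hωψfim : ∀ z ∈ D, (ωψf z).re = 0)
    (hne : ∀ z ∈ D, ωff z ≠ 0) :
    ∀ z ∈ D, dzbar (fun w => ψ w - f₁ w * ωψf w / ωff w) z =
      (u z + f₁ z * conj (f₁p z) / ωff z) *
        conj (ψ z - f₁ z * ωψf z / ωff z) :=
  simple_moutard_preserves_equation_general D hD u f₁ f₁p ψ ωff ωψf hf₁ hψC hωffC hωψfC hf hψ hωff2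
    hωffim hωψf2 hωψfim hne
end

section
/- Composition identity for the transformed coefficient (Theorem 1, coefficient part): with ω_{f₁,f₁⁺} ≠ 0 and Δ := ω_{f₁,f₁⁺}ω_{f₂,f₂⁺} - ω_{f₂,f₁⁺}ω_{f₁,f₂⁺} ≠ 0, and with ω's purely imaginary (so that conj(ω) = -ω), the iterated coefficient u + f₁·conj(f₁⁺)/ω_{f₁,f₁⁺} + f̃₂·conj(f̃₂⁺)/ω_{f̃₂,f̃₂⁺}, where f̃₂ = f₂ - f₁·ω_{f₂,f₁⁺}/ω_{f₁,f₁⁺}, f̃₂⁺ = f₂⁺ - f₁⁺·ω_{f₁,f₂⁺}/ω_{f₁,f₁⁺}, ω_{f̃₂,f̃₂⁺} = Δ/ω_{f₁,f₁⁺}, equals u + (f₁·conj(f₁⁺)·ω_{f₂,f₂⁺} - f₂·conj(f₁⁺)·ω_{f₁,f₂⁺} - f₁·conj(f₂⁺)·ω_{f₂,f₁⁺} + f₂·conj(f₂⁺)·ω_{f₁,f₁⁺})/Δ. -/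
open ComplexConjugate

theorem composition_of_simple_moutard_coefficient_general
    (u f₁ f₂ f₁p f₂p ω11 ω21 ω12 ω22 : ℂ)
    (h11 : conj ω11 = -ω11)
    (h12 : conj ω12 = -ω12)
    (h1 : ω11 ≠ 0)
    (hΔ : ω11 * ω22 - ω21 * ω12 ≠ 0) :
    u + f₁ * conj f₁p / ω11 +
      (f₂ - f₁ * ω21 / ω11) * conj (f₂p - f₁p * ω12 / ω11) /
        ((ω11 * ω22 - ω21 * ω12) / ω11) =
    u + (f₁ * conj f₁p * ω22 - f₂ * conj f₁p * ω12 -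
         f₁ * conj f₂p * ω21 + f₂ * conj f₂p * ω11) /
        (ω11 * ω22 - ω21 * ω12) := by
  -- ω12 / ω11 is real, being a ratio of purely imaginary numbers.
  have conj_f₂p_tilde : conj (f₂p - f₁p * ω12 / ω11) = conj f₂p - conj f₁p * ω12 / ω11 := by
    rw [map_sub, map_div₀, map_mul, h11, h12, mul_neg, neg_div_neg_eq]
  rw [conj_f₂p_tilde]
  field_simp
  ring

/-- Theorem 1, coefficient part: the iterated Moutard coefficient
equals the N = 2 Moutard coefficient, as an algebraic identity over ℂ with the
ω's purely imaginary. -/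
theorem composition_of_simple_moutard_coefficient
    (u f₁ f₂ f₁p f₂p ω11 ω21 ω12 ω22 : ℂ)
    (h11 : conj ω11 = -ω11) (h21 : conj ω21 = -ω21)
    (h12 : conj ω12 = -ω12) (h22 : conj ω22 = -ω22)
    (h1 : ω11 ≠ 0)
    (hΔ : ω11 * ω22 - ω21 * ω12 ≠ 0) :
    u + f₁ * conj f₁p / ω11 +
      (f₂ - f₁ * ω21 / ω11) * conj (f₂p - f₁p * ω12 / ω11) /
        ((ω11 * ω22 - ω21 * ω12) / ω11) =
    u + (f₁ * conj f₁p * ω22 - f₂ * conj f₁p * ω12 -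
         f₁ * conj f₂p * ω21 + f₂ * conj f₂p * ω11) /
        (ω11 * ω22 - ω21 * ω12) :=
  composition_of_simple_moutard_coefficient_general u f₁ f₂ f₁p f₂p ω11 ω21 ω12 ω22 h11 h12 h1 hΔ
end

section
/- Inversion of a simple Moutard transform (Theorem 2, part 1): suppose f₁, f₁⁺ solve ∂_z̄ f₁ = u·conj(f₁), ∂_z̄ f₁⁺ = -conj(u)·conj(f₁⁺), and ω_{f₁,f₁⁺}, ω_{ψ,f₁⁺} are purely imaginary potentials with ω_{f₁,f₁⁺} ≠ 0. Define f̂ = -i·f₁/ω_{f₁,f₁⁺}, f̂⁺ = -i·f₁⁺/ω_{f₁,f₁⁺}, ψ̃ = ψ - f₁·ω_{ψ,f₁⁺}/ω_{f₁,f₁⁺}. Then the function -i·ω_{ψ,f₁⁺}/ω_{f₁,f₁⁺} satisfies ∂_z(-i·ω_{ψ,f₁⁺}/ω_{f₁,f₁⁺}) = ψ̃·f̂⁺ and ∂_z̄(-i·ω_{ψ,f₁⁺}/ω_{f₁,f₁⁺}) = -conj(ψ̃·f̂⁺); similarly 1/ω_{f₁,f₁⁺} satisfies ∂_z(1/ω_{f₁,f₁⁺})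 = f̂·f̂⁺ and ∂_z̄(1/ω_{f₁,f₁⁺}) = -conj(f̂·f̂⁺). -/
/-!
A purely imaginary `C¹` function `F` satisfies `∂_z̄ F = -conj (∂_z F)`, since `conj ∘ F = -F`
and `∂_z̄ (conj ∘ F) = conj (∂_z F)`. Both `-i·ω_{ψ,f₁⁺}/ω_{f₁,f₁⁺}` and `1/ω_{f₁,f₁⁺}` are
purely imaginary, so only their `∂_z`-derivatives have to be computed, and the quotient rule
does that.
-/

open Complex ComplexConjugate Filter Topology

section Wirtinger

variable {f g : ℂ → ℂ} {z : ℂ}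

theorem HasFDerivAt.dz_eq {f' : ℂ →L[ℝ] ℂ} (h : HasFDerivAt f f' z) :
    dz f z = (f' 1 - I * f' I) / 2 := by
  rw [dz, h.fderiv]

theorem dz_mul (hf : DifferentiableAt ℝ f z) (hg : DifferentiableAt ℝ g z) :
    dz (fun w => f w * g w) z = dz f z * g z + f z * dz g z := by
  have h : HasFDerivAt (fun w => f w * g w) _ z := hf.hasFDerivAt.mul hg.hasFDerivAt
  rw [h.dz_eq, dz, dz]
  simp only [add_apply, smul_apply, smul_eq_mul]
  ring

theorem dz_inv (hg : DifferentiableAt ℝ g z) (hg₀ : g z ≠ 0) :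
    dz (fun w => (g w)⁻¹) z = -dz g z / g z ^ 2 := by
  have h : HasFDerivAt (fun w => (g w)⁻¹) _ z := (hasFDerivAt_inv' hg₀).comp z hg.hasFDerivAt
  rw [h.dz_eq, dz]
  simp only [ContinuousLinearMap.comp_apply, neg_apply,
    ContinuousLinearMap.mulLeftRight_apply]
  field_simp
  ring

theorem differentiableAt_div (hf : DifferentiableAt ℝ f z) (hg : DifferentiableAt ℝ g z)
    (hg₀ : g z ≠ 0) : DifferentiableAt ℝ (fun w => f w / g w) z := by
  simpa only [div_eq_mul_inv] using hf.fun_mul (hg.fun_inv hg₀)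

theorem dz_div (hf : DifferentiableAt ℝ f z) (hg : DifferentiableAt ℝ g z) (hg₀ : g z ≠ 0) :
    dz (fun w => f w / g w) z = (dz f z * g z - f z * dz g z) / g z ^ 2 := by
  simp only [div_eq_mul_inv]
  rw [dz_mul hf (hg.fun_inv hg₀), dz_inv hg hg₀]
  field_simp
  ring

theorem dz_const (c : ℂ) : dz (fun _ => c) z = 0 := by
  simp [dz]

theorem dz_const_mul (c : ℂ) (hf : DifferentiableAt ℝ f z) :
    dz (fun w => c * f w) z = c * dz f z := by
  have h : HasFDerivAt (fun w => c * f w) _ z := hf.hasFDerivAt.const_mul c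
  rw [h.dz_eq, dz]
  simp only [smul_apply, smul_eq_mul]
  ring

theorem dzbar_conj (hf : DifferentiableAt ℝ f z) :
    dzbar (fun w => conj (f w)) z = conj (dz f z) := by
  have h : HasFDerivAt (fun w => conj (f w)) _ z := hf.hasFDerivAt.star
  rw [dzbar, h.fderiv, dz]
  simp only [ContinuousLinearMap.comp_apply, ContinuousLinearEquiv.coe_coe, starL'_apply,
    Complex.star_def, map_div₀, map_sub, map_mul, conj_I, map_ofNat]
  ring

theorem dzbar_eq_neg_conj_dz (hf : DifferentiableAt ℝ f z) (himag : ∀ᶠ w in 𝓝 z, (f w).re = 0) :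
    dzbar f z = -conj (dz f z) := by
  have hconj : (fun w => conj (f w)) =ᶠ[𝓝 z] -f := by
    filter_upwards [himag] with w hw
    exact Complex.ext (by simp [hw]) (by simp)
  have hneg : dzbar (fun w => conj (f w)) z = -dzbar f z := by
    simp only [dzbar, hconj.fderiv_eq, fderiv_neg, neg_apply]
    ring
  rw [← dzbar_conj hf, hneg, neg_neg]

end Wirtinger

theorem re_neg_I_mul_div_eq_zero {a b : ℂ} (ha : a.re = 0) (hb : b.re = 0) :
    (-I * a / b).re = 0 := by
  simp [div_re, ha, hb]

theorem re_one_div_eq_zero {b : ℂ} (hb : b.re = 0) : (1 / b).re = 0 := by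
  simp [hb]

theorem inversion_potentials_general
    (D : Set ℂ) (hD : IsOpen D) (f₁ f₁p ψ ωff ωψf : ℂ → ℂ)
    (hωffC : ContDiffOn ℝ 1 ωff D) (hωψfC : ContDiffOn ℝ 1 ωψf D)
    (hωff1 : ∀ z ∈ D, dz ωff z = f₁ z * f₁p z)
    (hωffim : ∀ z ∈ D, (ωff z).re = 0)
    (hωψf1 : ∀ z ∈ D, dz ωψf z = ψ z * f₁p z)
    (hωψfim : ∀ z ∈ D, (ωψf z).re = 0)
    (hne : ∀ z ∈ D, ωff z ≠ 0) :
    ∀ z ∈ D,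
      (dz (fun w => -Complex.I * ωψf w / ωff w) z =
          (ψ z - f₁ z * ωψf z / ωff z) * (-Complex.I * f₁p z / ωff z) ∧
        dzbar (fun w => -Complex.I * ωψf w / ωff w) z =
          -conj ((ψ z - f₁ z * ωψf z / ωff z) * (-Complex.I * f₁p z / ωff z))) ∧
      (dz (fun w => 1 / ωff w) z =
          (-Complex.I * f₁ z / ωff z) * (-Complex.I * f₁p z / ωff z) ∧
        dzbar (fun w => 1 / ωff w) z =
          -conj ((-Complex.I * f₁ z / ωff z) * (-Complex.I * f₁p z / ωff z))) := by
  intro z hz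
  have hDz : D ∈ 𝓝 z := hD.mem_nhds hz
  have hωff : DifferentiableAt ℝ ωff z := (hωffC.contDiffAt hDz).differentiableAt one_ne_zero
  have hωψf : DifferentiableAt ℝ ωψf z := (hωψfC.contDiffAt hDz).differentiableAt one_ne_zero
  have h₀ := hne z hz
  have hdz₁ : dz (fun w => -I * ωψf w / ωff w) z =
      (ψ z - f₁ z * ωψf z / ωff z) * (-I * f₁p z / ωff z) := by
    rw [dz_div (hωψf.const_mul _) hωff h₀, dz_const_mul _ hωψf, hωψf1 z hz, hωff1 z hz]
    field_simp
    ring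
  have hdz₂ : dz (fun w => 1 / ωff w) z = (-I * f₁ z / ωff z) * (-I * f₁p z / ωff z) := by
    rw [dz_div (differentiableAt_const 1) hωff h₀, dz_const, hωff1 z hz]
    linear_combination -(f₁ z * f₁p z / ωff z ^ 2) * I_sq
  refine ⟨⟨hdz₁, ?_⟩, hdz₂, ?_⟩
  · rw [← hdz₁]
    refine dzbar_eq_neg_conj_dz (differentiableAt_div (hωψf.const_mul _) hωff h₀) ?_
    filter_upwards [hDz] with w hw using re_neg_I_mul_div_eq_zero (hωψfim w hw) (hωffim w hw)
  · rw [← hdz₂]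
    refine dzbar_eq_neg_conj_dz (differentiableAt_div (differentiableAt_const 1) hωff h₀) ?_
    filter_upwards [hDz] with w hw using re_one_div_eq_zero (hωffim w hw)

/-- Theorem 2, part 1: the explicit functions
-i·ω_{ψ,f₁⁺}/ω_{f₁,f₁⁺} and 1/ω_{f₁,f₁⁺} are potentials for the pairs
(ψ̃, f̂⁺) and (f̂, f̂⁺) respectively. -/
theorem inversion_potentials
    (D : Set ℂ) (hD : IsOpen D) (u f₁ f₁p ψ ωff ωψf : ℂ → ℂ)
    (hu : ContDiffOn ℝ 1 u D) (hf₁ : ContDiffOn ℝ 1 f₁ D)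
    (hf₁p : ContDiffOn ℝ 1 f₁p D) (hψC : ContDiffOn ℝ 1 ψ D)
    (hωffC : ContDiffOn ℝ 1 ωff D) (hωψfC : ContDiffOn ℝ 1 ωψf D)
    (hf : ∀ z ∈ D, dzbar f₁ z = u z * conj (f₁ z))
    (hfp : ∀ z ∈ D, dzbar f₁p z = -conj (u z) * conj (f₁p z))
    (hψ : ∀ z ∈ D, dzbar ψ z = u z * conj (ψ z))
    (hωff1 : ∀ z ∈ D, dz ωff z = f₁ z * f₁p z)
    (hωff2 : ∀ z ∈ D, dzbar ωff z = -conj (f₁ z * f₁p z))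
    (hωffim : ∀ z ∈ D, (ωff z).re = 0)
    (hωψf1 : ∀ z ∈ D, dz ωψf z = ψ z * f₁p z)
    (hωψf2 : ∀ z ∈ D, dzbar ωψf z = -conj (ψ z * f₁p z))
    (hωψfim : ∀ z ∈ D, (ωψf z).re = 0)
    (hne : ∀ z ∈ D, ωff z ≠ 0) :
    ∀ z ∈ D,
      (dz (fun w => -Complex.I * ωψf w / ωff w) z =
          (ψ z - f₁ z * ωψf z / ωff z) * (-Complex.I * f₁p z / ωff z) ∧
        dzbar (fun w => -Complex.I * ωψf w / ωff w) z =
          -conj ((ψ z - f₁ z * ωψf z / ωff z) * (-Complex.I * f₁p z / ωff z))) ∧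
      (dz (fun w => 1 / ωff w) z =
          (-Complex.I * f₁ z / ωff z) * (-Complex.I * f₁p z / ωff z) ∧
        dzbar (fun w => 1 / ωff w) z =
          -conj ((-Complex.I * f₁ z / ωff z) * (-Complex.I * f₁p z / ωff z))) :=
  inversion_potentials_general D hD f₁ f₁p ψ ωff ωψf hωffC hωψfC hωff1 hωffim hωψf1 hωψfim hne
end

section
/- Cancellation of the leading singularity in the Moutard-transformed coefficient (key step of Theorem 3): let φ be real-valued, b(y) = β_{-1}(y)β⁺_{-1}(y) > 0 real-valued continuous. Suppose near x = 0: u_*(x,y) = e^{2iφ(y)}(-1/(2x) + O(1)), f_*·conj(f⁺_*)(x,y) = i·e^{2iφ(y)}·b(y)/x² + O(1/x), and ω(x,y) = 2i·b(y)/x + O(1) with ω nonvanishing for 0 < |x| < δ. Then 1/ω = -i·x/(2b(y)) + O(x²) and ũ := u_* + f_*·conj(f⁺_*)/ω = O(1) as x → 0, uniformly for y in a compact subinterval, i.e. the transformed coefficient ũ is bounded near the contour {x = 0}. -/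
/-!
Near `x = 0` the weight `ω` is dominated by its leading term `2iβ/x`, with `β = b(y)` bounded
below by some `b₀ > 0` on the compact interval. Hence `|x|·‖ω‖ ≥ β` once `|x|` is small, and
`1/ω + ix/(2β) = ix(ω - 2iβ/x)/(2βω)` is `O(x²)`. Consequently the leading part of `p/ω` is
`(ieβ/x²)·(-ix/(2β)) = e/(2x)`, which cancels the singular part `-e/(2x)` of `u`; the
remainders are `O(1)`.
-/

open Complex

section Pointwise

variable {β x K : ℝ} {w : ℂ}

theorem le_abs_mul_norm_of_norm_sub_le (hxK : |x| * K ≤ β)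
    (hw : ‖w - 2 * I * β / x‖ ≤ K) (hβ : 0 < β) (hx : x ≠ 0) : β ≤ |x| * ‖w‖ := by
  have hsplit : (x : ℂ) * w = 2 * I * β + x * (w - 2 * I * β / x) := by
    have : (x : ℂ) ≠ 0 := by exact_mod_cast hx
    field_simp; ring
  have hlead : ‖(2 * I * β : ℂ)‖ = 2 * β := by
    simp [Complex.norm_real, abs_of_pos hβ]
  have herr : ‖(x : ℂ) * (w - 2 * I * β / x)‖ ≤ |x| * K := by
    rw [norm_mul, Complex.norm_real, Real.norm_eq_abs]
    exact mul_le_mul_of_nonneg_left hw (abs_nonneg x)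
  calc β ≤ 2 * β - |x| * K := by linarith
    _ ≤ ‖(2 * I * β : ℂ)‖ - ‖(x : ℂ) * (w - 2 * I * β / x)‖ := by rw [hlead]; linarith
    _ ≤ ‖(x : ℂ) * w‖ := by rw [hsplit]; exact norm_sub_le_norm_add _ _
    _ = |x| * ‖w‖ := by rw [norm_mul, Complex.norm_real, Real.norm_eq_abs]

theorem ne_zero_of_norm_sub_le (hxK : |x| * K ≤ β)
    (hw : ‖w - 2 * I * β / x‖ ≤ K) (hβ : 0 < β) (hx : x ≠ 0) : w ≠ 0 := by
  rintro rfl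
  have := le_abs_mul_norm_of_norm_sub_le hxK hw hβ hx
  simp only [norm_zero, mul_zero] at this
  linarith

theorem norm_one_div_add_le (hxK : |x| * K ≤ β)
    (hw : ‖w - 2 * I * β / x‖ ≤ K) (hβ : 0 < β) (hx : x ≠ 0) :
    ‖1 / w + I * x / (2 * β)‖ ≤ K * x ^ 2 / (2 * β ^ 2) := by
  have hwx := le_abs_mul_norm_of_norm_sub_le hxK hw hβ hx
  have hw0 := ne_zero_of_norm_sub_le hxK hw hβ hx
  have hid : 1 / w + I * x / (2 * β) = I * x * (w - 2 * I * β / x) / (2 * β * w) := by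
    have : (β : ℂ) ≠ 0 := by exact_mod_cast hβ.ne'
    have : (x : ℂ) ≠ 0 := by exact_mod_cast hx
    field_simp
    ring_nf
    simp only [I_sq]
    ring
  have hnorm : ‖I * x * (w - 2 * I * β / x) / (2 * β * w)‖
      = |x| * ‖w - 2 * I * β / x‖ / (2 * β * ‖w‖) := by
    simp [abs_of_pos hβ]
  rw [hid, hnorm, div_le_div_iff₀ (by positivity) (by positivity), ← sq_abs x]
  have hK : 0 ≤ K := (norm_nonneg _).trans hw
  calc |x| * ‖w - 2 * I * β / x‖ * (2 * β ^ 2)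
        = |x| * ‖w - 2 * I * β / x‖ * (2 * β * β) := by ring
    _ ≤ |x| * K * (2 * β * β) := by gcongr
    _ ≤ |x| * K * (2 * β * (|x| * ‖w‖)) := by gcongr
    _ = K * |x| ^ 2 * (2 * β * ‖w‖) := by ring

theorem norm_add_div_le {u p e : ℂ} (he : ‖e‖ = 1)
    (hu : ‖u - e * (-(1 / (2 * x)))‖ ≤ K) (hp : ‖p - I * e * β / x ^ 2‖ ≤ K / |x|)
    (hxK : |x| * K ≤ β) (hw : ‖w - 2 * I * β / x‖ ≤ K) (hβ : 0 < β) (hx : x ≠ 0) :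
    ‖u + p / w‖ ≤ K + K / β + K / (2 * β) := by
  have hw0 := ne_zero_of_norm_sub_le hxK hw hβ hx
  have hK : 0 ≤ K := (norm_nonneg _).trans hw
  have hx0 : 0 < |x| := abs_pos.mpr hx
  have hsplit : u + p / w = (u - e * (-(1 / (2 * x)))) + (p - I * e * β / x ^ 2) * (1 / w)
      + I * e * β / x ^ 2 * (1 / w + I * x / (2 * β)) := by
    have : (β : ℂ) ≠ 0 := by exact_mod_cast hβ.ne'
    have : (x : ℂ) ≠ 0 := by exact_mod_cast hx
    field_simp
    ring_nf
    simp only [I_sq]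
    ring
  have hinv : ‖1 / w‖ ≤ |x| / β := by
    rw [norm_div, norm_one, div_le_div_iff₀ (norm_pos_iff.mpr hw0) hβ, one_mul]
    exact le_abs_mul_norm_of_norm_sub_le hxK hw hβ hx
  have hcoef : ‖I * e * β / x ^ 2‖ = β / |x| ^ 2 := by
    simp [he, abs_of_pos hβ]
  have hp' : ‖(p - I * e * β / x ^ 2) * (1 / w)‖ ≤ K / β := by
    rw [norm_mul]
    calc _ ≤ K / |x| * (|x| / β) := by gcongr
      _ = K / β := by field_simp
  have hcancel : ‖I * e * β / x ^ 2 * (1 / w + I * x / (2 * β))‖ ≤ K / (2 * β) := by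
    rw [norm_mul, hcoef]
    calc _ ≤ β / |x| ^ 2 * (K * x ^ 2 / (2 * β ^ 2)) := by
          gcongr; exact norm_one_div_add_le hxK hw hβ hx
      _ = K / (2 * β) := by rw [← sq_abs x]; field_simp
  calc ‖u + p / w‖ ≤ ‖u - e * (-(1 / (2 * x)))‖ + ‖(p - I * e * β / x ^ 2) * (1 / w)‖
        + ‖I * e * β / x ^ 2 * (1 / w + I * x / (2 * β))‖ := by
        rw [hsplit]; exact norm_add₃_le
    _ ≤ K + K / β + K / (2 * β) := by gcongr

end Pointwise

theorem transformed_coefficient_bounded_general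
    (a b ε : ℝ) (hε : 0 < ε)
    (φ : ℝ → ℝ) (bb : ℝ → ℝ)
    (hbbcont : ContinuousOn bb (Set.Icc a b))
    (hbbpos : ∀ y ∈ Set.Icc a b, 0 < bb y)
    (u p ω : ℝ → ℝ → ℂ)
    (C : ℝ)
    -- u_*(x,y) = e^{2iφ(y)}·(-1/(2x)) + O(1)
    (hu : ∀ x y, 0 < |x| → |x| < ε → y ∈ Set.Icc a b →
      ‖(u x y -
        Complex.exp (2 * Complex.I * (φ y : ℂ)) * (-(1 / (2 * (x : ℂ)))))‖ ≤ C)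
    -- f_*·conj(f⁺_*)(x,y) = i·e^{2iφ(y)}·b(y)/x² + O(1/x)
    (hp : ∀ x y, 0 < |x| → |x| < ε → y ∈ Set.Icc a b →
      ‖(p x y -
        Complex.I * Complex.exp (2 * Complex.I * (φ y : ℂ)) * (bb y : ℂ) /
          (x : ℂ) ^ 2)‖ ≤ C / |x|)
    -- ω(x,y) = 2i·b(y)/x + O(1)
    (hω : ∀ x y, 0 < |x| → |x| < ε → y ∈ Set.Icc a b →
      ‖(ω x y - 2 * Complex.I * (bb y : ℂ) / (x : ℂ))‖ ≤ C) :
    ∃ δ ∈ Set.Ioo 0 ε, ∃ C' > 0, ∀ x y, 0 < |x| → |x| < δ → y ∈ Set.Icc a b →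
      ω x y ≠ 0 ∧
      ‖(1 / ω x y + Complex.I * (x : ℂ) / (2 * (bb y : ℂ)))‖ ≤
        C' * x ^ 2 ∧
      ‖(u x y + p x y / ω x y)‖ ≤ C' := by
  obtain ⟨b₀, hb₀, hb₀le⟩ := isCompact_Icc.exists_forall_le' hbbcont hbbpos
  set K := |C|
  refine ⟨min (ε / 2) (b₀ / (K + 1)),
    ⟨by positivity, by linarith [min_le_left (ε / 2) (b₀ / (K + 1))]⟩,
    K / (2 * b₀ ^ 2) + (K + K / b₀ + K / (2 * b₀)) + 1, by positivity, ?_⟩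
  intro x y hx hxδ hy
  have hxε : |x| < ε := by linarith [hxδ.trans_le (min_le_left _ _)]
  have hβ : 0 < bb y := hbbpos y hy
  have hxK : |x| * K ≤ bb y := by
    have := (lt_div_iff₀ (by positivity)).mp (hxδ.trans_le (min_le_right _ _))
    nlinarith [hb₀le y hy]
  have hx0 : x ≠ 0 := abs_pos.mp hx
  have hωK := (hω x y hx hxε hy).trans (le_abs_self C)
  have he : ‖exp (2 * I * φ y)‖ = 1 := by
    rw [show 2 * I * (φ y : ℂ) = ((2 * φ y : ℝ) : ℂ) * I by push_cast; ring]
    exact norm_exp_ofReal_mul_I _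
  refine ⟨ne_zero_of_norm_sub_le hxK hωK hβ hx0, ?_, ?_⟩
  · calc _ ≤ K * x ^ 2 / (2 * bb y ^ 2) := norm_one_div_add_le hxK hωK hβ hx0
      _ ≤ K / (2 * b₀ ^ 2) * x ^ 2 := by
        rw [mul_div_right_comm]; gcongr; exact hb₀le y hy
      _ ≤ _ := by gcongr; linarith [show 0 ≤ K + K / b₀ + K / (2 * b₀) by positivity]
  · calc _ ≤ K + K / bb y + K / (2 * bb y) :=
          norm_add_div_le he ((hu x y hx hxε hy).trans (le_abs_self C))
            ((hp x y hx hxε hy).trans (by gcongr; exact le_abs_self C)) hxK hωK hβ hx0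
      _ ≤ K + K / b₀ + K / (2 * b₀) := by gcongr <;> exact hb₀le y hy
      _ ≤ _ := by linarith [show 0 ≤ K / (2 * b₀ ^ 2) by positivity]

/-- key step of Theorem 3: the singular parts cancel and the
Moutard-transformed coefficient ũ = u_* + f_*·conj(f⁺_*)/ω is bounded near the
contour {x = 0}, together with the asymptotics 1/ω = -i·x/(2b(y)) + O(x²). -/
theorem transformed_coefficient_bounded
    (a b ε : ℝ) (hε : 0 < ε)
    (φ : ℝ → ℝ) (bb : ℝ → ℝ)
    (hbbcont : ContinuousOn bb (Set.Icc a b))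
    (hbbpos : ∀ y ∈ Set.Icc a b, 0 < bb y)
    (u p ω : ℝ → ℝ → ℂ)
    (C : ℝ)
    -- u_*(x,y) = e^{2iφ(y)}·(-1/(2x)) + O(1)
    (hu : ∀ x y, 0 < |x| → |x| < ε → y ∈ Set.Icc a b →
      ‖(u x y -
        Complex.exp (2 * Complex.I * (φ y : ℂ)) * (-(1 / (2 * (x : ℂ)))))‖ ≤ C)
    -- f_*·conj(f⁺_*)(x,y) = i·e^{2iφ(y)}·b(y)/x² + O(1/x)
    (hp : ∀ x y, 0 < |x| → |x| < ε → y ∈ Set.Icc a b →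
      ‖(p x y -
        Complex.I * Complex.exp (2 * Complex.I * (φ y : ℂ)) * (bb y : ℂ) /
          (x : ℂ) ^ 2)‖ ≤ C / |x|)
    -- ω(x,y) = 2i·b(y)/x + O(1)
    (hω : ∀ x y, 0 < |x| → |x| < ε → y ∈ Set.Icc a b →
      ‖(ω x y - 2 * Complex.I * (bb y : ℂ) / (x : ℂ))‖ ≤ C)
    -- ω nonvanishing near the contour
    (hωne : ∃ δ₀ > 0, ∀ x y, 0 < |x| → |x| < δ₀ → y ∈ Set.Icc a b →
      ω x y ≠ 0) :
    ∃ δ ∈ Set.Ioo 0 ε, ∃ C' > 0, ∀ x y, 0 < |x| → |x| < δ → y ∈ Set.Icc a b →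
      ω x y ≠ 0 ∧
      ‖(1 / ω x y + Complex.I * (x : ℂ) / (2 * (bb y : ℂ)))‖ ≤
        C' * x ^ 2 ∧
      ‖(u x y + p x y / ω x y)‖ ≤ C' :=
  transformed_coefficient_bounded_general a b ε hε φ bb hbbcont hbbpos u p ω C hu hp hω
end
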